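/- For any directed graph G with m edges and any target node t, Σ_{v ∈ V} π(v,t)·d_in(v) ≤ (m · n·π(t) · n·π(t)/(1-α))^{1/2} = n·π(t)·(m/(1-α))^{1/2}. -/

import Mathlib

/-!
Each edge `(u, v)` contributes `π(v,t)` to `Σ_v π(v,t) d_in(v)`. Cauchy–Schwarz over the edges,
splitting `π(v,t) = √(π(v,t)/d_out(u)) · √(π(v,t) d_out(u))`, bounds its square by the product of
`Σ_{(u,v)} π(v,t)/d_out(u)`, which the PPR recurrence bounds by `nπ(t)/(1-α)`, and
`Σ_{(u,v)} π(v,t) d_out(u) = Σ_v π(v,t) Σ_{u ∈ N_in(v)} d_out(u) ≤ m · nπ(t)`.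
-/

open Finset

variable {V : Type*}

/-- Out-neighbors of `v` in the directed graph with edge relation `E`. -/
def outNbrs [Fintype V] (E : V → V → Prop) [DecidableRel E] (v : V) : Finset V :=
  Finset.univ.filter fun w => E v w

/-- In-neighbors of `v`. -/
def inNbrs [Fintype V] (E : V → V → Prop) [DecidableRel E] (v : V) : Finset V :=
  Finset.univ.filter fun u => E u v

/-- Out-degree. -/
def doutd [Fintype V] (E : V → V → Prop) [DecidableRel E] (v : V) : ℕ := (outNbrs E v).card

/-- In-degree. -/
def dind [Fintype V] (E : V → V → Prop) [DecidableRel E] (v : V) : ℕ := (inNbrs E v).card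

/-- Random-walk transition matrix: from `u`, move to a uniformly random out-neighbor. -/
noncomputable def transMat [Fintype V] (E : V → V → Prop) [DecidableRel E] : Matrix V V ℝ :=
  Matrix.of fun u v => if E u v then (1 : ℝ) / doutd E u else 0

/-- Personalized PageRank `π(u,t)`: probability that an `α`-discounted random walk
(length `ℓ` with probability `α(1-α)^ℓ`) started at `u` terminates at `t`. -/
noncomputable def ppr [Fintype V] [DecidableEq V] (α : ℝ) (E : V → V → Prop) [DecidableRel E]
    (u t : V) : ℝ :=
  ∑' ℓ : ℕ, α * (1 - α) ^ ℓ * (transMat E ^ ℓ) u t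

/-- PageRank `π(t)`: probability that an `α`-discounted random walk started at a uniformly
random node terminates at `t`. -/
noncomputable def pgrk [Fintype V] [DecidableEq V] (α : ℝ) (E : V → V → Prop) [DecidableRel E]
    (t : V) : ℝ :=
  (1 / (Fintype.card V : ℝ)) * ∑ u : V, ppr α E u t

namespace Matrix

variable {n R : Type*} [Fintype n] [DecidableEq n] [Semiring R] [PartialOrder R]
  [IsOrderedRing R] {P : Matrix n n R}

lemma sum_pow_apply_le_one (hP : ∀ i j, 0 ≤ P i j) (hP1 : ∀ i, ∑ j, P i j ≤ 1) (ℓ : ℕ)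
    (i : n) : ∑ j, (P ^ ℓ) i j ≤ 1 := by
  induction ℓ generalizing i with
  | zero => simp [one_apply]
  | succ ℓ ih =>
    calc ∑ j, (P ^ (ℓ + 1)) i j = ∑ k, P i k * ∑ j, (P ^ ℓ) k j := by
          simp only [pow_succ', mul_apply, mul_sum]
          exact sum_comm
      _ ≤ ∑ k, P i k * 1 := by gcongr with k; exacts [hP i k, ih k]
      _ ≤ 1 := by simpa using hP1 i

lemma pow_apply_le_one (hP : ∀ i j, 0 ≤ P i j) (hP1 : ∀ i, ∑ j, P i j ≤ 1) (ℓ : ℕ)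
    (i j : n) : (P ^ ℓ) i j ≤ 1 :=
  (single_le_sum (fun k _ => pow_apply_nonneg hP ℓ i k) (mem_univ j)).trans
    (sum_pow_apply_le_one hP hP1 ℓ i)

end Matrix

section Graph

variable [Fintype V] (E : V → V → Prop) [DecidableRel E]

lemma sum_transMat_mul (f : V → ℝ) (u : V) :
    ∑ v, transMat E u v * f v = (∑ v ∈ outNbrs E u, f v) / doutd E u := by
  simp only [transMat, Matrix.of_apply, ite_mul, zero_mul, one_div_mul_eq_div, sum_div,
    outNbrs, sum_filter, ite_div, zero_div]

lemma transMat_nonneg (u v : V) : 0 ≤ transMat E u v := by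
  simp only [transMat, Matrix.of_apply]
  split <;> positivity

lemma sum_transMat_le_one (u : V) : ∑ v, transMat E u v ≤ 1 := by
  have h := sum_transMat_mul E (fun _ => 1) u
  simp only [mul_one, sum_const, nsmul_eq_mul] at h
  rw [h]
  exact div_self_le_one (doutd E u : ℝ)

def edges : Finset (V × V) := univ.filter fun p => E p.1 p.2

variable {E}

lemma doutd_pos_of_mem_edges {p : V × V} (hp : p ∈ edges E) : 0 < doutd E p.1 :=
  card_pos.2 ⟨p.2, by simpa [outNbrs, edges] using hp⟩

variable (E)

lemma sum_edges_eq_sum_outNbrs {M : Type*} [AddCommMonoid M] (f : V × V → M) :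
    ∑ p ∈ edges E, f p = ∑ u, ∑ v ∈ outNbrs E u, f (u, v) := by
  simp only [edges, outNbrs, sum_filter, ← univ_product_univ, sum_product]

lemma sum_edges_eq_sum_inNbrs {M : Type*} [AddCommMonoid M] (f : V × V → M) :
    ∑ p ∈ edges E, f p = ∑ v, ∑ u ∈ inNbrs E v, f (u, v) := by
  simp only [edges, inNbrs, sum_filter, ← univ_product_univ, sum_product_right]

lemma sum_edges_snd (f : V → ℝ) : ∑ p ∈ edges E, f p.2 = ∑ v, f v * dind E v := by
  simp [sum_edges_eq_sum_inNbrs, dind, mul_comm]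

lemma sq_sum_edges_snd_le {f : V → ℝ} (hf : ∀ v, 0 ≤ f v) :
    (∑ p ∈ edges E, f p.2) ^ 2 ≤
      (∑ p ∈ edges E, f p.2 / doutd E p.1) * ∑ p ∈ edges E, f p.2 * doutd E p.1 := by
  refine sum_sq_le_sum_mul_sum_of_sq_le_mul _ (fun p _ => ?_) (fun p _ => ?_) (fun p hp => ?_)
  · exact div_nonneg (hf _) (Nat.cast_nonneg _)
  · exact mul_nonneg (hf _) (Nat.cast_nonneg _)
  · have := (Nat.cast_pos (α := ℝ)).2 (doutd_pos_of_mem_edges hp)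
    exact (by field_simp : _ = _).le

lemma sum_edges_snd_mul_doutd_le {f : V → ℝ} (hf : ∀ v, 0 ≤ f v) :
    ∑ p ∈ edges E, f p.2 * doutd E p.1 ≤ (∑ u, (doutd E u : ℝ)) * ∑ v, f v := by
  rw [sum_edges_eq_sum_inNbrs, mul_sum]
  gcongr with v
  dsimp only
  rw [← mul_sum, mul_comm]
  gcongr
  exacts [hf v, subset_univ _]

end Graph

section PPR

variable [Fintype V] [DecidableEq V] (E : V → V → Prop) [DecidableRel E] {α : ℝ}

lemma summable_ppr (h0 : 0 < α) (h1 : α ≤ 1) (u t : V) :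
    Summable fun ℓ : ℕ => α * (1 - α) ^ ℓ * (transMat E ^ ℓ) u t := by
  have hweight (ℓ : ℕ) : 0 ≤ α * (1 - α) ^ ℓ := by
    have : 0 ≤ 1 - α := by linarith
    positivity
  have hgeom : Summable fun ℓ : ℕ => α * (1 - α) ^ ℓ :=
    (summable_geometric_of_lt_one (by linarith) (by linarith)).mul_left α
  refine hgeom.of_nonneg_of_le (fun ℓ => ?_) (fun ℓ => ?_)
  · exact mul_nonneg (hweight ℓ) (Matrix.pow_apply_nonneg (transMat_nonneg E) ℓ u t)
  · exact mul_le_of_le_one_right (hweight ℓ)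
      (Matrix.pow_apply_le_one (transMat_nonneg E) (sum_transMat_le_one E) ℓ u t)

lemma ppr_nonneg (h0 : 0 ≤ α) (h1 : α ≤ 1) (u t : V) : 0 ≤ ppr α E u t :=
  tsum_nonneg fun ℓ => mul_nonneg (mul_nonneg h0 (pow_nonneg (sub_nonneg.2 h1) ℓ))
    (Matrix.pow_apply_nonneg (transMat_nonneg E) ℓ u t)

lemma ppr_eq (h0 : 0 < α) (h1 : α ≤ 1) (u t : V) :
    ppr α E u t = α * (if u = t then 1 else 0)
      + (1 - α) / doutd E u * ∑ v ∈ outNbrs E u, ppr α E v t := by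
  have hterm (ℓ : ℕ) : α * (1 - α) ^ (ℓ + 1) * (transMat E ^ (ℓ + 1)) u t
      = ∑ v, (1 - α) * transMat E u v * (α * (1 - α) ^ ℓ * (transMat E ^ ℓ) v t) := by
    rw [pow_succ', pow_succ', Matrix.mul_apply, mul_sum]
    exact sum_congr rfl fun v _ => by ring
  have hshift : HasSum (fun ℓ : ℕ => α * (1 - α) ^ (ℓ + 1) * (transMat E ^ (ℓ + 1)) u t)
      (∑ v, (1 - α) * transMat E u v * ppr α E v t) := by
    rw [funext hterm]
    exact hasSum_sum fun v _ => (summable_ppr E h0 h1 v t).hasSum.mul_left _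
  conv_lhs => rw [ppr]
  rw [(summable_ppr E h0 h1 u t).tsum_eq_zero_add, hshift.tsum_eq]
  simp only [mul_assoc, ← mul_sum, sum_transMat_mul]
  simp [Matrix.one_apply, mul_div_assoc', div_mul_eq_mul_div]

lemma sum_edges_ppr_div_doutd_le (hα : α ∈ Set.Ioo (0 : ℝ) 1) (t : V) :
    ∑ p ∈ edges E, ppr α E p.2 t / doutd E p.1 ≤ (∑ u, ppr α E u t) / (1 - α) := by
  have h1α : 0 < 1 - α := by linarith [hα.2]
  rw [sum_edges_eq_sum_outNbrs, sum_div]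
  gcongr with u
  dsimp only
  rw [le_div_iff₀ h1α, ← sum_div, ppr_eq E hα.1 hα.2.le u t]
  have : 0 ≤ α * (if u = t then (1 : ℝ) else 0) := by split_ifs <;> simp [hα.1.le]
  have hcomm : (∑ v ∈ outNbrs E u, ppr α E v t) / doutd E u * (1 - α)
      = (1 - α) / doutd E u * ∑ v ∈ outNbrs E u, ppr α E v t := by ring
  linarith

lemma card_mul_pgrk (t : V) : (Fintype.card V : ℝ) * pgrk α E t = ∑ u, ppr α E u t := by
  rcases isEmpty_or_nonempty V with hV | hV
  · simp
  · rw [pgrk, ← mul_assoc, mul_one_div_cancel (Nat.cast_ne_zero.2 Fintype.card_ne_zero),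
      one_mul]

end PPR

theorem sum_ppr_indeg_le_general [Fintype V] [DecidableEq V] (E : V → V → Prop) [DecidableRel E]
    (α : ℝ) (hα : α ∈ Set.Ioo (0 : ℝ) 1) (t : V)
    (m : ℕ) (hm : m = ∑ v : V, doutd E v) :
    (∑ v : V, ppr α E v t * (dind E v : ℝ)) ≤
        Real.sqrt ((m : ℝ) * ((Fintype.card V : ℝ) * pgrk α E t) *
          ((Fintype.card V : ℝ) * pgrk α E t) / (1 - α)) ∧
      Real.sqrt ((m : ℝ) * ((Fintype.card V : ℝ) * pgrk α E t) *
          ((Fintype.card V : ℝ) * pgrk α E t) / (1 - α)) =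
        (Fintype.card V : ℝ) * pgrk α E t * Real.sqrt ((m : ℝ) / (1 - α)) := by
  have h1α : 0 < 1 - α := by linarith [hα.2]
  have hppr (v : V) : 0 ≤ ppr α E v t := ppr_nonneg E hα.1.le hα.2.le v t
  rw [card_mul_pgrk]
  set S := ∑ u, ppr α E u t
  have hS : 0 ≤ S := sum_nonneg fun u _ => hppr u
  have hsq : (∑ v, ppr α E v t * (dind E v : ℝ)) ^ 2 ≤ m * S * S / (1 - α) :=
    calc (∑ v, ppr α E v t * (dind E v : ℝ)) ^ 2 = (∑ p ∈ edges E, ppr α E p.2 t) ^ 2 := by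
          rw [sum_edges_snd E (ppr α E · t)]
      _ ≤ (∑ p ∈ edges E, ppr α E p.2 t / doutd E p.1) *
            ∑ p ∈ edges E, ppr α E p.2 t * doutd E p.1 := sq_sum_edges_snd_le E hppr
      _ ≤ S / (1 - α) * (m * S) := by
          rw [hm, Nat.cast_sum]
          exact mul_le_mul (sum_edges_ppr_div_doutd_le E hα t) (sum_edges_snd_mul_doutd_le E hppr)
            (sum_nonneg fun p _ => mul_nonneg (hppr _) (Nat.cast_nonneg _)) (by positivity)
      _ = m * S * S / (1 - α) := by ring
  refine ⟨(le_abs_self _).trans (Real.abs_le_sqrt hsq), ?_⟩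
  rw [show (m : ℝ) * S * S / (1 - α) = S ^ 2 * (m / (1 - α)) by ring,
    Real.sqrt_mul (sq_nonneg S), Real.sqrt_sq hS]

/-- For any directed graph with `m` edges and any target `t`,
`Σ_v π(v,t)·d_in(v) ≤ (m · nπ(t) · nπ(t)/(1-α))^{1/2} = nπ(t)·(m/(1-α))^{1/2}`. -/
theorem sum_ppr_indeg_le [Fintype V] [DecidableEq V] (E : V → V → Prop) [DecidableRel E]
    (α : ℝ) (hα : α ∈ Set.Ioo (0 : ℝ) 1) (hpos : ∀ v : V, 0 < doutd E v) (t : V)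
    (m : ℕ) (hm : m = ∑ v : V, doutd E v) :
    (∑ v : V, ppr α E v t * (dind E v : ℝ)) ≤
        Real.sqrt ((m : ℝ) * ((Fintype.card V : ℝ) * pgrk α E t) *
          ((Fintype.card V : ℝ) * pgrk α E t) / (1 - α)) ∧
      Real.sqrt ((m : ℝ) * ((Fintype.card V : ℝ) * pgrk α E t) *
          ((Fintype.card V : ℝ) * pgrk α E t) / (1 - α)) =
        (Fintype.card V : ℝ) * pgrk α E t * Real.sqrt ((m : ℝ) / (1 - α)) :=
  sum_ppr_indeg_le_general E α hα t m hm
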